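/- Let T, X, Y be bounded linear operators on H admitting A-adjoints T♯, X♯, Y♯ respectively. Then w_A(T∘X ± Y∘T) ≤ 2√2 · max{‖X‖_A, ‖Y‖_A} · √( w_A(T)² − | ‖Re_A(T) + Im_A(T)‖_A² − ‖Re_A(T) − Im_A(T)‖_A² | / 4 ), for both choices of sign. -/

import Mathlib

noncomputable section

open Complex ContinuousLinearMap

variable {H : Type*} [NormedAddCommGroup H] [InnerProductSpace ℂ H] [CompleteSpace H]

/-- The `A`-inner product `⟨x, y⟩_A = ⟨A x, y⟩`. -/
def innA (A : H →L[ℂ] H) (x y : H) : ℂ := @inner ℂ _ _ (A x) y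

/-- The `A`-seminorm `‖x‖_A = √⟨A x, x⟩`. -/
def vnormA (A : H →L[ℂ] H) (x : H) : ℝ := Real.sqrt (innA A x x).re

/-- The `A`-operator seminorm `‖T‖_A = sup {‖T x‖_A : ‖x‖_A = 1}`. -/
def opnormA (A T : H →L[ℂ] H) : ℝ :=
  sSup {r : ℝ | ∃ x : H, vnormA A x = 1 ∧ r = vnormA A (T x)}

/-- The `A`-numerical radius `w_A(T) = sup {|⟨T x, x⟩_A| : ‖x‖_A = 1}`. -/
def wA (A T : H →L[ℂ] H) : ℝ :=
  sSup {r : ℝ | ∃ x : H, vnormA A x = 1 ∧ r = ‖innA A (T x) x‖}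

/-- The `A`-numerical range `W_A(T) = {⟨T x, x⟩_A : ‖x‖_A = 1}`. -/
def WA (A T : H →L[ℂ] H) : Set ℂ :=
  {z : ℂ | ∃ x : H, vnormA A x = 1 ∧ z = innA A (T x) x}

/-- `Re_A(T) = (T + T♯)/2`, given an `A`-adjoint `Ts` of `T`. -/
def ReA (T Ts : H →L[ℂ] H) : H →L[ℂ] H := (2 : ℂ)⁻¹ • (T + Ts)

/-- `Im_A(T) = (T - T♯)/(2i)`, given an `A`-adjoint `Ts` of `T`. -/
def ImA (T Ts : H →L[ℂ] H) : H →L[ℂ] H := (2 * Complex.I)⁻¹ • (T - Ts)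

/-- `Ts` is an `A`-adjoint of `T`, i.e. `A ∘ Ts = T* ∘ A`. -/
def IsAAdjoint (A T Ts : H →L[ℂ] H) : Prop :=
  A.comp Ts = (ContinuousLinearMap.adjoint T).comp A

/-! Since `⟨x, y⟩_A = ⟨√A x, √A y⟩`, the `A`-seminorm satisfies Cauchy–Schwarz and the
parallelogram law, and an operator with an `A`-adjoint is `A`-bounded (Krein), so `‖T‖_A` and
`w_A(T)` bound `‖T x‖_A` and `|⟨T x, x⟩_A|` pointwise. For `‖x‖_A = 1`,
`|⟨(T X ± Y T) x, x⟩_A| ≤ ‖X‖_A ‖T♯ x‖_A + ‖Y‖_A ‖T x‖_A`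
`≤ √2 max(‖X‖_A, ‖Y‖_A) √(‖T x‖_A² + ‖T♯ x‖_A²)`.
With `P = Re_A T + Im_A T` and `Q = Re_A T - Im_A T`, the parallelogram law gives
`‖T x‖_A² + ‖T♯ x‖_A² = ‖P x‖_A² + ‖Q x‖_A² ≤ p² + q²`, where `p = ‖P‖_A`, `q = ‖Q‖_A`.
Both `P` and `Q` are `A`-selfadjoint, with `⟨P x, x⟩_A`, `⟨Q x, x⟩_A` equal to `Re z ± Im z` for
`z = ⟨T x, x⟩_A`, so by polarization `p, q ≤ √2 w_A(T)`, whence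
`p² + q² = 2 max(p², q²) - |p² - q²| ≤ 4 w_A(T)² - |p² - q²|`.
-/

open ComplexConjugate

set_option linter.unusedSectionVars false

section Seminorm

variable {A : H →L[ℂ] H}

lemma innA_eq_inner_sqrt (hA : A.IsPositive) (x y : H) :
    innA A x y = inner ℂ (CFC.sqrt A x) (CFC.sqrt A y) := by
  have hS : adjoint (CFC.sqrt A) = CFC.sqrt A :=
    (CFC.sqrt_nonneg A).isSelfAdjoint.adjoint_eq
  have hA' : A x = CFC.sqrt A (CFC.sqrt A x) := by
    rw [← mul_apply_eq_comp, CFC.sqrt_mul_sqrt_self A ((nonneg_iff_isPositive A).mpr hA)]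
  rw [innA, hA', ← adjoint_inner_left, hS]

lemma vnormA_eq_norm_sqrt (hA : A.IsPositive) (x : H) : vnormA A x = ‖CFC.sqrt A x‖ := by
  rw [vnormA, innA_eq_inner_sqrt hA, inner_self_eq_norm_sq_to_K]
  norm_cast
  exact Real.sqrt_sq (norm_nonneg _)

lemma innA_add_left (x y z : H) : innA A (x + y) z = innA A x z + innA A y z := by
  rw [innA, innA, innA, map_add, inner_add_left]

lemma innA_sub_left (x y z : H) : innA A (x - y) z = innA A x z - innA A y z := by
  rw [innA, innA, innA, map_sub, inner_sub_left]

lemma vnormA_nonneg (A : H →L[ℂ] H) (x : H) : 0 ≤ vnormA A x := Real.sqrt_nonneg _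

lemma innA_self (hA : A.IsPositive) (x : H) : innA A x x = ((vnormA A x ^ 2 : ℝ) : ℂ) := by
  rw [innA_eq_inner_sqrt hA, vnormA_eq_norm_sqrt hA, inner_self_eq_norm_sq_to_K]
  norm_cast

lemma norm_innA_le (hA : A.IsPositive) (x y : H) :
    ‖innA A x y‖ ≤ vnormA A x * vnormA A y := by
  rw [innA_eq_inner_sqrt hA, vnormA_eq_norm_sqrt hA, vnormA_eq_norm_sqrt hA]
  exact norm_inner_le_norm _ _

lemma conj_innA (hA : IsSelfAdjoint A) (x y : H) : conj (innA A x y) = innA A y x := by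
  rw [innA, innA, inner_conj_symm, ← adjoint_inner_left, hA.adjoint_eq]

lemma vnormA_smul (hA : A.IsPositive) (c : ℂ) (x : H) : vnormA A (c • x) = ‖c‖ * vnormA A x := by
  rw [vnormA_eq_norm_sqrt hA, vnormA_eq_norm_sqrt hA, map_smul, norm_smul]

lemma vnormA_add_sq_add_vnormA_sub_sq (hA : A.IsPositive) (x y : H) :
    vnormA A (x + y) ^ 2 + vnormA A (x - y) ^ 2 = 2 * (vnormA A x ^ 2 + vnormA A y ^ 2) := by
  simp only [vnormA_eq_norm_sqrt hA, map_add, map_sub]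
  exact parallelogram_law_with_norm ℂ (CFC.sqrt A x) (CFC.sqrt A y)

end Seminorm

section Adjoint

variable {A T Ts U Us : H →L[ℂ] H}

lemma IsAAdjoint.innA_apply_left (hA : IsSelfAdjoint A) (hT : IsAAdjoint A T Ts) (x y : H) :
    innA A (T x) y = innA A x (Ts y) := by
  have hTs : A (Ts y) = adjoint T (A y) := congr($hT y)
  have hA' : ∀ u v, inner ℂ (A u) v = inner ℂ u (A v) := hA.isSymmetric
  rw [innA, innA, hA', hA', hTs, adjoint_inner_right]

lemma IsAAdjoint.symm (hA : IsSelfAdjoint A) (hT : IsAAdjoint A T Ts) : IsAAdjoint A Ts T := by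
  have h := congr(adjoint $hT)
  rw [adjoint_comp, adjoint_comp, adjoint_adjoint, hA.adjoint_eq] at h
  exact h.symm

lemma IsAAdjoint.comp (hT : IsAAdjoint A T Ts) (hU : IsAAdjoint A U Us) :
    IsAAdjoint A (T.comp U) (Us.comp Ts) := by
  rw [IsAAdjoint, adjoint_comp, ← comp_assoc, hU, comp_assoc, hT, comp_assoc]

lemma IsAAdjoint.add (hT : IsAAdjoint A T Ts) (hU : IsAAdjoint A U Us) :
    IsAAdjoint A (T + U) (Ts + Us) := by
  rw [IsAAdjoint, comp_add, map_add, add_comp, hT, hU]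

lemma IsAAdjoint.smul (hT : IsAAdjoint A T Ts) (c : ℂ) : IsAAdjoint A (c • T) (conj c • Ts) := by
  rw [IsAAdjoint, comp_smul, map_smulₛₗ, smul_comp, hT]

lemma IsAAdjoint.sub (hT : IsAAdjoint A T Ts) (hU : IsAAdjoint A U Us) :
    IsAAdjoint A (T - U) (Ts - Us) := by
  rw [IsAAdjoint, comp_sub, map_sub, sub_comp, hT, hU]

lemma IsAAdjoint.pow {B : H →L[ℂ] H} (hB : IsAAdjoint A B B) (n : ℕ) :
    IsAAdjoint A (B ^ n) (B ^ n) := by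
  induction n with
  | zero => simp [IsAAdjoint, one_def, adjoint_id]
  | succ n ih => simpa only [← mul_def, ← pow_succ, ← pow_succ'] using ih.comp hB

lemma IsAAdjoint.reA (hA : IsSelfAdjoint A) (hT : IsAAdjoint A T Ts) :
    IsAAdjoint A (ReA T Ts) (ReA T Ts) := by
  have h := (hT.add (hT.symm hA)).smul (2 : ℂ)⁻¹
  rwa [map_inv₀, map_ofNat, add_comm Ts] at h

lemma IsAAdjoint.imA (hA : IsSelfAdjoint A) (hT : IsAAdjoint A T Ts) :
    IsAAdjoint A (ImA T Ts) (ImA T Ts) := by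
  have h := (hT.sub (hT.symm hA)).smul (2 * I)⁻¹
  rwa [map_inv₀, map_mul, conj_I, map_ofNat, mul_neg, inv_neg, neg_smul, ← smul_neg,
    neg_sub] at h

end Adjoint

lemma le_of_forall_pow_two_pow_le {q b C : ℝ} (hb : 0 ≤ b)
    (h : ∀ n : ℕ, q ^ 2 ^ n ≤ C * b ^ 2 ^ n) : q ≤ b := by
  by_contra! hlt
  rcases hb.eq_or_lt with rfl | hb
  · simpa [hlt.not_ge] using h 0
  obtain ⟨n, hn⟩ := pow_unbounded_of_one_lt C ((one_lt_div hb).mpr hlt)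
  have hle : (q / b) ^ 2 ^ n ≤ C := by
    rw [div_pow, div_le_iff₀ (by positivity)]
    exact h n
  linarith [pow_le_pow_right₀ ((one_lt_div hb).mpr hlt).le (Nat.lt_two_pow_self (n := n)).le]

section Krein

variable {A B : H →L[ℂ] H}

lemma IsAAdjoint.vnormA_apply_sq_le (hA : A.IsPositive) (hB : IsAAdjoint A B B) (x : H) :
    vnormA A (B x) ^ 2 ≤ vnormA A (B (B x)) * vnormA A x := by
  calc vnormA A (B x) ^ 2 = ‖innA A (B (B x)) x‖ := by
        rw [hB.innA_apply_left hA.isSelfAdjoint, innA_self hA, Complex.norm_real,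
          Real.norm_of_nonneg (sq_nonneg _)]
    _ ≤ vnormA A (B (B x)) * vnormA A x := norm_innA_le hA _ _

lemma IsAAdjoint.vnormA_apply_pow_two_pow_mul_le (hA : A.IsPositive) (hB : IsAAdjoint A B B)
    (x : H) (n : ℕ) :
    vnormA A (B x) ^ 2 ^ n * vnormA A x ≤ vnormA A ((B ^ 2 ^ n) x) * vnormA A x ^ 2 ^ n := by
  induction n with
  | zero => simp
  | succ n ih =>
    rcases (vnormA_nonneg A x).eq_or_lt with hs | hs
    · rw [← hs, mul_zero, zero_pow (by positivity), mul_zero]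
    have hstep := (hB.pow (2 ^ n)).vnormA_apply_sq_le hA x
    rw [← mul_apply_eq_comp, ← pow_add, ← two_mul, ← pow_succ'] at hstep
    have ih2 := pow_le_pow_left₀ (mul_nonneg (pow_nonneg (vnormA_nonneg A _) _) hs.le) ih 2
    refine le_of_mul_le_mul_right ?_ hs
    calc vnormA A (B x) ^ 2 ^ (n + 1) * vnormA A x * vnormA A x
        = (vnormA A (B x) ^ 2 ^ n * vnormA A x) ^ 2 := by ring
      _ ≤ vnormA A ((B ^ 2 ^ n) x) ^ 2 * (vnormA A x ^ 2 ^ n) ^ 2 := by rw [← mul_pow]; exact ih2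
      _ ≤ vnormA A ((B ^ 2 ^ (n + 1)) x) * vnormA A x * (vnormA A x ^ 2 ^ n) ^ 2 := by gcongr
      _ = vnormA A ((B ^ 2 ^ (n + 1)) x) * vnormA A x ^ 2 ^ (n + 1) * vnormA A x := by ring

-- Krein's argument: the bound `‖B ^ 2 ^ n x‖_A ≤ ‖√A‖ ‖B‖ ^ 2 ^ n ‖x‖` is crude, but only its
-- `2 ^ n`-th root matters, and that tends to `‖B‖`.
lemma IsAAdjoint.vnormA_apply_le_opNorm_mul (hA : A.IsPositive) (hB : IsAAdjoint A B B) (x : H) :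
    vnormA A (B x) ≤ ‖B‖ * vnormA A x := by
  rcases (vnormA_nonneg A x).eq_or_lt with hs | hs
  · have h := hB.vnormA_apply_sq_le hA x
    rw [← hs, mul_zero] at h ⊢
    exact (pow_eq_zero_iff two_ne_zero).mp (le_antisymm h (sq_nonneg _)) |>.le
  refine le_of_forall_pow_two_pow_le (C := ‖CFC.sqrt A‖ * ‖x‖ / vnormA A x) (by positivity)
    fun n => ?_
  have hpow : vnormA A ((B ^ 2 ^ n) x) ≤ ‖CFC.sqrt A‖ * ‖x‖ * ‖B‖ ^ 2 ^ n := by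
    calc vnormA A ((B ^ 2 ^ n) x) = ‖CFC.sqrt A ((B ^ 2 ^ n) x)‖ := vnormA_eq_norm_sqrt hA _
      _ ≤ ‖CFC.sqrt A‖ * (‖B ^ 2 ^ n‖ * ‖x‖) :=
          (le_opNorm _ _).trans (by gcongr; exact le_opNorm _ _)
      _ ≤ ‖CFC.sqrt A‖ * (‖B‖ ^ 2 ^ n * ‖x‖) := by
          gcongr; exact norm_pow_le' B (Nat.two_pow_pos n)
      _ = ‖CFC.sqrt A‖ * ‖x‖ * ‖B‖ ^ 2 ^ n := by ring
  rw [div_mul_eq_mul_div, le_div_iff₀ hs, mul_pow]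
  calc vnormA A (B x) ^ 2 ^ n * vnormA A x ≤ vnormA A ((B ^ 2 ^ n) x) * vnormA A x ^ 2 ^ n :=
        hB.vnormA_apply_pow_two_pow_mul_le hA x n
    _ ≤ ‖CFC.sqrt A‖ * ‖x‖ * (‖B‖ ^ 2 ^ n * vnormA A x ^ 2 ^ n) := by
        rw [← mul_assoc]; gcongr

end Krein

section Bounded

def IsABounded (A T : H →L[ℂ] H) : Prop := ∃ c, ∀ x, vnormA A (T x) ≤ c * vnormA A x

variable {A T Ts : H →L[ℂ] H}

lemma IsAAdjoint.isABounded (hA : A.IsPositive) (hT : IsAAdjoint A T Ts) : IsABounded A T := by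
  refine ⟨√‖Ts.comp T‖, fun x => ?_⟩
  have hTsT : IsAAdjoint A (Ts.comp T) (Ts.comp T) := (hT.symm hA.isSelfAdjoint).comp hT
  have h : vnormA A (T x) ^ 2 ≤ ‖Ts.comp T‖ * vnormA A x ^ 2 :=
    calc vnormA A (T x) ^ 2 = ‖innA A x (Ts (T x))‖ := by
          rw [← hT.innA_apply_left hA.isSelfAdjoint, innA_self hA, Complex.norm_real,
            Real.norm_of_nonneg (sq_nonneg _)]
      _ ≤ vnormA A x * vnormA A (Ts (T x)) := norm_innA_le hA _ _
      _ ≤ vnormA A x * (‖Ts.comp T‖ * vnormA A x) := by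
          gcongr
          · exact vnormA_nonneg A x
          · exact hTsT.vnormA_apply_le_opNorm_mul hA x
      _ = ‖Ts.comp T‖ * vnormA A x ^ 2 := by ring
  calc vnormA A (T x) = √(vnormA A (T x) ^ 2) := (Real.sqrt_sq (vnormA_nonneg A _)).symm
    _ ≤ √(‖Ts.comp T‖ * vnormA A x ^ 2) := Real.sqrt_le_sqrt h
    _ = √‖Ts.comp T‖ * vnormA A x := by
        rw [Real.sqrt_mul (norm_nonneg _), Real.sqrt_sq (vnormA_nonneg A x)]

lemma opnormA_nonneg (A T : H →L[ℂ] H) : 0 ≤ opnormA A T :=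
  Real.sSup_nonneg fun _ ⟨_, _, hr⟩ => hr ▸ vnormA_nonneg A _

lemma wA_nonneg (A T : H →L[ℂ] H) : 0 ≤ wA A T :=
  Real.sSup_nonneg fun _ ⟨_, _, hr⟩ => hr ▸ norm_nonneg _

lemma vnormA_inv_smul_self (hA : A.IsPositive) {x : H} (hx : 0 < vnormA A x) :
    vnormA A ((vnormA A x : ℂ)⁻¹ • x) = 1 := by
  rw [vnormA_smul hA, norm_inv, Complex.norm_real, Real.norm_of_nonneg hx.le,
    inv_mul_cancel₀ hx.ne']

lemma norm_innA_smul (c : ℂ) (x y : H) : ‖innA A (c • x) (c • y)‖ = ‖c‖ ^ 2 * ‖innA A x y‖ := by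
  simp only [innA, map_smul, inner_smul_left, inner_smul_right, norm_mul, Complex.norm_conj]
  ring

lemma IsABounded.vnormA_apply_le (hA : A.IsPositive) (hT : IsABounded A T) (x : H) :
    vnormA A (T x) ≤ opnormA A T * vnormA A x := by
  obtain ⟨c, hc⟩ := hT
  rcases (vnormA_nonneg A x).eq_or_lt with hs | hs
  · simpa [← hs] using hc x
  have hbdd : BddAbove {r | ∃ x, vnormA A x = 1 ∧ r = vnormA A (T x)} :=
    ⟨c, by rintro _ ⟨y, hy, rfl⟩; simpa [hy] using hc y⟩
  have h := le_csSup hbdd ⟨_, vnormA_inv_smul_self hA hs, rfl⟩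
  rwa [map_smul, vnormA_smul hA, norm_inv, Complex.norm_real, Real.norm_of_nonneg hs.le,
    inv_mul_le_iff₀ hs, mul_comm] at h

lemma IsABounded.norm_innA_apply_le (hA : A.IsPositive) (hT : IsABounded A T) (x : H) :
    ‖innA A (T x) x‖ ≤ wA A T * vnormA A x ^ 2 := by
  obtain ⟨c, hc⟩ := hT
  rcases (vnormA_nonneg A x).eq_or_lt with hs | hs
  · simpa [← hs] using norm_innA_le hA (T x) x
  have hbdd : BddAbove {r | ∃ x, vnormA A x = 1 ∧ r = ‖innA A (T x) x‖} := by
    refine ⟨c, ?_⟩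
    rintro _ ⟨y, hy, rfl⟩
    simpa [hy] using (norm_innA_le hA (T y) y).trans (by simpa [hy] using hc y)
  have h := le_csSup hbdd ⟨_, vnormA_inv_smul_self hA hs, rfl⟩
  rwa [map_smul, norm_innA_smul, norm_inv, Complex.norm_real, Real.norm_of_nonneg hs.le,
    inv_pow, inv_mul_le_iff₀ (by positivity), mul_comm] at h

end Bounded

section Polarization

variable {A B : H →L[ℂ] H}

lemma IsAAdjoint.two_mul_re_innA_le (hA : A.IsPositive) (hB : IsAAdjoint A B B) (x y : H) :
    2 * (innA A (B x) y).re ≤ wA A B * (vnormA A x ^ 2 + vnormA A y ^ 2) := by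
  have hBb := hB.isABounded hA
  have hconj : innA A (B y) x = conj (innA A (B x) y) := by
    rw [hB.innA_apply_left hA.isSelfAdjoint y x, conj_innA hA.isSelfAdjoint]
  have hpol : innA A (B (x + y)) (x + y) - innA A (B (x - y)) (x - y)
      = 2 * (innA A (B x) y + innA A (B y) x) := by
    simp only [innA, map_add, map_sub, inner_add_left, inner_add_right, inner_sub_left,
      inner_sub_right]
    ring
  rw [hconj, Complex.add_conj] at hpol
  have h : 4 * (innA A (B x) y).re ≤ 2 * (wA A B * (vnormA A x ^ 2 + vnormA A y ^ 2)) :=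
    calc 4 * (innA A (B x) y).re
        = (innA A (B (x + y)) (x + y) - innA A (B (x - y)) (x - y)).re := by
          rw [hpol]; simp; ring
      _ ≤ ‖innA A (B (x + y)) (x + y)‖ + ‖innA A (B (x - y)) (x - y)‖ :=
          (Complex.re_le_norm _).trans (norm_sub_le _ _)
      _ ≤ wA A B * vnormA A (x + y) ^ 2 + wA A B * vnormA A (x - y) ^ 2 :=
          add_le_add (hBb.norm_innA_apply_le hA _) (hBb.norm_innA_apply_le hA _)
      _ = 2 * (wA A B * (vnormA A x ^ 2 + vnormA A y ^ 2)) := by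
          rw [← mul_add, vnormA_add_sq_add_vnormA_sub_sq hA]; ring
  linarith

lemma IsAAdjoint.opnormA_le_wA (hA : A.IsPositive) (hB : IsAAdjoint A B B) :
    opnormA A B ≤ wA A B := by
  refine Real.sSup_le ?_ (wA_nonneg A B)
  rintro _ ⟨x, hx, rfl⟩
  rcases (vnormA_nonneg A (B x)).eq_or_lt with h0 | hpos
  · exact h0 ▸ wA_nonneg A B
  have h := hB.two_mul_re_innA_le hA x ((vnormA A (B x) : ℂ)⁻¹ • B x)
  rw [vnormA_inv_smul_self hA hpos, hx, innA, inner_smul_right, ← innA, innA_self hA,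
    ← Complex.ofReal_inv, ← Complex.ofReal_mul, Complex.ofReal_re, sq,
    inv_mul_cancel_left₀ hpos.ne'] at h
  linarith

end Polarization

lemma abs_re_sub_im_le (z : ℂ) : |z.re - z.im| ≤ √2 * ‖z‖ := by
  rw [← Real.sqrt_sq (norm_nonneg z), ← Real.sqrt_mul zero_le_two]
  refine Real.abs_le_sqrt ?_
  rw [Complex.sq_norm, Complex.normSq_apply]
  nlinarith [sq_nonneg (z.re + z.im)]

lemma reA_sub_imA (T Ts : H →L[ℂ] H) : ReA T Ts - ImA T Ts = ReA Ts T + ImA Ts T := by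
  rw [ReA, ReA, ImA, ImA, add_comm Ts, ← neg_sub T Ts, smul_neg, sub_eq_add_neg]

section RealImaginaryParts

variable {A T Ts : H →L[ℂ] H}

lemma IsAAdjoint.wA_eq (hA : IsSelfAdjoint A) (hT : IsAAdjoint A T Ts) : wA A Ts = wA A T := by
  have h : ∀ x, ‖innA A (Ts x) x‖ = ‖innA A (T x) x‖ := fun x => by
    rw [(hT.symm hA).innA_apply_left hA, ← conj_innA hA, Complex.norm_conj]
  simp only [wA, h]

lemma IsAAdjoint.innA_reA_add_imA_apply_self (hA : IsSelfAdjoint A) (hT : IsAAdjoint A T Ts)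
    (x : H) :
    innA A ((ReA T Ts + ImA T Ts) x) x = ((innA A (T x) x).re - (innA A (T x) x).im : ℝ) := by
  have h : innA A (Ts x) x = conj (innA A (T x) x) := by
    rw [(hT.symm hA).innA_apply_left hA, conj_innA hA]
  have hlin : innA A ((ReA T Ts + ImA T Ts) x) x
      = conj (2 : ℂ)⁻¹ * (innA A (T x) x + innA A (Ts x) x)
        + conj (2 * I)⁻¹ * (innA A (T x) x - innA A (Ts x) x) := by
    simp only [ReA, ImA, innA, add_apply, sub_apply, smul_apply, map_add, map_sub, map_smul,
      inner_add_left, inner_sub_left, inner_smul_left]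
  rw [hlin, h, Complex.add_conj, Complex.sub_conj, map_inv₀, map_inv₀, map_mul, conj_I, map_ofNat]
  push_cast
  field_simp
  ring

lemma IsAAdjoint.opnormA_reA_add_imA_le (hA : A.IsPositive) (hT : IsAAdjoint A T Ts) :
    opnormA A (ReA T Ts + ImA T Ts) ≤ √2 * wA A T := by
  have hsa := hA.isSelfAdjoint
  refine (((hT.reA hsa).add (hT.imA hsa)).opnormA_le_wA hA).trans
    (Real.sSup_le ?_ (by have := wA_nonneg A T; positivity))
  rintro _ ⟨x, hx, rfl⟩
  rw [hT.innA_reA_add_imA_apply_self hsa, Complex.norm_real, Real.norm_eq_abs]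
  refine (abs_re_sub_im_le _).trans ?_
  gcongr
  simpa [hx] using (hT.isABounded hA).norm_innA_apply_le hA x

lemma IsAAdjoint.opnormA_reA_sub_imA_le (hA : A.IsPositive) (hT : IsAAdjoint A T Ts) :
    opnormA A (ReA T Ts - ImA T Ts) ≤ √2 * wA A T := by
  rw [reA_sub_imA, ← hT.wA_eq hA.isSelfAdjoint]
  exact (hT.symm hA.isSelfAdjoint).opnormA_reA_add_imA_le hA

end RealImaginaryParts

section Main

variable {A T Ts X Y : H →L[ℂ] H}

lemma vnormA_sq_add_vnormA_sq_reA_imA (hA : A.IsPositive) (T Ts : H →L[ℂ] H) (x : H) :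
    vnormA A (T x) ^ 2 + vnormA A (Ts x) ^ 2
      = vnormA A ((ReA T Ts + ImA T Ts) x) ^ 2 + vnormA A ((ReA T Ts - ImA T Ts) x) ^ 2 := by
  have hsum : (ReA T Ts + ImA T Ts) x + (ReA T Ts - ImA T Ts) x = T x + Ts x := by
    simp only [ReA, ImA, add_apply, sub_apply, smul_apply]
    module
  have hdiff : (ReA T Ts + ImA T Ts) x - (ReA T Ts - ImA T Ts) x = I⁻¹ • (T x - Ts x) := by
    simp only [ReA, ImA, add_apply, sub_apply, smul_apply]
    module
  have h :=
    vnormA_add_sq_add_vnormA_sub_sq hA ((ReA T Ts + ImA T Ts) x) ((ReA T Ts - ImA T Ts) x)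
  rw [hsum, hdiff, vnormA_smul hA, norm_inv, norm_I, inv_one, one_mul,
    vnormA_add_sq_add_vnormA_sub_sq hA] at h
  linarith

lemma IsAAdjoint.vnormA_apply_add_vnormA_le (hA : A.IsPositive) (hT : IsAAdjoint A T Ts)
    {x : H} (hx : vnormA A x = 1) :
    vnormA A (T x) + vnormA A (Ts x) ≤ 2 * √2 * √(wA A T ^ 2 -
      |opnormA A (ReA T Ts + ImA T Ts) ^ 2 - opnormA A (ReA T Ts - ImA T Ts) ^ 2| / 4) := by
  set P := ReA T Ts + ImA T Ts
  set Q := ReA T Ts - ImA T Ts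
  set D := |opnormA A P ^ 2 - opnormA A Q ^ 2|
  have hsa := hA.isSelfAdjoint
  have hPx : vnormA A (P x) ^ 2 ≤ opnormA A P ^ 2 := by
    have h := (((hT.reA hsa).add (hT.imA hsa)).isABounded hA).vnormA_apply_le hA x
    rw [hx, mul_one] at h
    exact pow_le_pow_left₀ (vnormA_nonneg A _) h 2
  have hQx : vnormA A (Q x) ^ 2 ≤ opnormA A Q ^ 2 := by
    have h := (((hT.reA hsa).sub (hT.imA hsa)).isABounded hA).vnormA_apply_le hA x
    rw [hx, mul_one] at h
    exact pow_le_pow_left₀ (vnormA_nonneg A _) h 2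
  have hP2 : opnormA A P ^ 2 ≤ 2 * wA A T ^ 2 := by
    simpa [mul_pow] using pow_le_pow_left₀ (opnormA_nonneg A P) (hT.opnormA_reA_add_imA_le hA) 2
  have hQ2 : opnormA A Q ^ 2 ≤ 2 * wA A T ^ 2 := by
    simpa [mul_pow] using pow_le_pow_left₀ (opnormA_nonneg A Q) (hT.opnormA_reA_sub_imA_le hA) 2
  have hPQ : opnormA A P ^ 2 + opnormA A Q ^ 2 ≤ 4 * (wA A T ^ 2 - D / 4) := by
    cases abs_cases (opnormA A P ^ 2 - opnormA A Q ^ 2) <;> linarith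
  have hc : 0 ≤ wA A T ^ 2 - D / 4 := by
    linarith [sq_nonneg (opnormA A P), sq_nonneg (opnormA A Q)]
  have ha := vnormA_nonneg A (T x)
  have hb := vnormA_nonneg A (Ts x)
  refine (pow_le_pow_iff_left₀ (by positivity) (by positivity) two_ne_zero).mp ?_
  calc (vnormA A (T x) + vnormA A (Ts x)) ^ 2
      ≤ 2 * (vnormA A (T x) ^ 2 + vnormA A (Ts x) ^ 2) := by
        nlinarith [sq_nonneg (vnormA A (T x) - vnormA A (Ts x))]
    _ = 2 * (vnormA A (P x) ^ 2 + vnormA A (Q x) ^ 2) := by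
        rw [vnormA_sq_add_vnormA_sq_reA_imA hA]
    _ ≤ 2 * (4 * (wA A T ^ 2 - D / 4)) := by linarith
    _ = (2 * √2 * √(wA A T ^ 2 - D / 4)) ^ 2 := by
        rw [mul_pow, mul_pow, Real.sq_sqrt zero_le_two, Real.sq_sqrt hc]
        ring

lemma IsAAdjoint.norm_innA_comp_add_norm_innA_comp_le (hA : A.IsPositive)
    (hT : IsAAdjoint A T Ts) (hX : IsABounded A X) (hY : IsABounded A Y) {x : H}
    (hx : vnormA A x = 1) :
    ‖innA A (T (X x)) x‖ + ‖innA A (Y (T x)) x‖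
      ≤ max (opnormA A X) (opnormA A Y) * (vnormA A (T x) + vnormA A (Ts x)) := by
  have hTX : ‖innA A (T (X x)) x‖ ≤ opnormA A X * vnormA A (Ts x) := by
    rw [hT.innA_apply_left hA.isSelfAdjoint]
    refine (norm_innA_le hA _ _).trans ?_
    gcongr
    · exact vnormA_nonneg A _
    · simpa [hx] using hX.vnormA_apply_le hA x
  have hYT : ‖innA A (Y (T x)) x‖ ≤ opnormA A Y * vnormA A (T x) :=
    calc ‖innA A (Y (T x)) x‖ ≤ vnormA A (Y (T x)) * vnormA A x := norm_innA_le hA _ _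
      _ ≤ opnormA A Y * vnormA A (T x) := by rw [hx, mul_one]; exact hY.vnormA_apply_le hA _
  calc ‖innA A (T (X x)) x‖ + ‖innA A (Y (T x)) x‖
      ≤ opnormA A X * vnormA A (Ts x) + opnormA A Y * vnormA A (T x) := add_le_add hTX hYT
    _ ≤ max (opnormA A X) (opnormA A Y) * vnormA A (Ts x)
        + max (opnormA A X) (opnormA A Y) * vnormA A (T x) := by
        gcongr
        exacts [vnormA_nonneg A _, le_max_left _ _, vnormA_nonneg A _, le_max_right _ _]
    _ = max (opnormA A X) (opnormA A Y) * (vnormA A (T x) + vnormA A (Ts x)) := by ring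

end Main

theorem stmt15 (A T Ts X Xs Y Ys : H →L[ℂ] H) (hA : A.IsPositive)
    (hT : IsAAdjoint A T Ts) (hX : IsAAdjoint A X Xs) (hY : IsAAdjoint A Y Ys) :
    wA A (T.comp X + Y.comp T) ≤
        2 * Real.sqrt 2 * max (opnormA A X) (opnormA A Y) *
          Real.sqrt (wA A T ^ 2 -
            |opnormA A (ReA T Ts + ImA T Ts) ^ 2 - opnormA A (ReA T Ts - ImA T Ts) ^ 2| / 4) ∧
      wA A (T.comp X - Y.comp T) ≤
        2 * Real.sqrt 2 * max (opnormA A X) (opnormA A Y) *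
          Real.sqrt (wA A T ^ 2 -
            |opnormA A (ReA T Ts + ImA T Ts) ^ 2 - opnormA A (ReA T Ts - ImA T Ts) ^ 2| / 4) := by
  set M := max (opnormA A X) (opnormA A Y)
  set c := √(wA A T ^ 2 -
    |opnormA A (ReA T Ts + ImA T Ts) ^ 2 - opnormA A (ReA T Ts - ImA T Ts) ^ 2| / 4)
  have hM : 0 ≤ M := (opnormA_nonneg A X).trans (le_max_left _ _)
  have key : ∀ x, vnormA A x = 1 →
      ‖innA A (T (X x)) x‖ + ‖innA A (Y (T x)) x‖ ≤ 2 * √2 * M * c := fun x hx =>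
    calc ‖innA A (T (X x)) x‖ + ‖innA A (Y (T x)) x‖
        ≤ M * (vnormA A (T x) + vnormA A (Ts x)) :=
          hT.norm_innA_comp_add_norm_innA_comp_le hA (hX.isABounded hA) (hY.isABounded hA) hx
      _ ≤ M * (2 * √2 * c) := by gcongr; exact hT.vnormA_apply_add_vnormA_le hA hx
      _ = 2 * √2 * M * c := by ring
  have hbound : 0 ≤ 2 * √2 * M * c := by positivity
  refine ⟨Real.sSup_le ?_ hbound, Real.sSup_le ?_ hbound⟩ <;> rintro _ ⟨x, hx, rfl⟩
  · rw [add_apply, comp_apply, comp_apply, innA_add_left]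
    exact (norm_add_le _ _).trans (key x hx)
  · rw [sub_apply, comp_apply, comp_apply, innA_sub_left]
    exact (norm_sub_le _ _).trans (key x hx)
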